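/- arXiv:1702.07126 — 2 statements merged into one kernel-verified Lean document; each statement's English description precedes it below -/
import Mathlib

section
/- Let f : [1,∞) → [1,∞) be continuous and increasing such that t ↦ f(t)/√t is decreasing on [1,∞). Fix t ≥ 1 and assume that a ↦ 1/(a f(a)) is integrable on (t,∞). Then ∫_t^∞ da/(a f(a)) ≥ 2/f(t); consequently g(t) := (∫_t^∞ da/(a f(a)))^{−1} satisfies g(t) ≤ f(t)/2. -/
open Set MeasureTheory

/-- If `f : [1,∞) → [1,∞)` is continuous and increasing with `f(t)/√t` decreasing,
and `a ↦ 1/(a f(a))` is integrable on `(t,∞)` for a fixed `t ≥ 1`, then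
`∫_t^∞ da/(a f(a)) ≥ 2/f(t)`; consequently `g(t) := (∫_t^∞ da/(a f(a)))⁻¹`
satisfies `g(t) ≤ f(t)/2`. -/
theorem integral_lower_bound_and_g_le_half_f
    (f : ℝ → ℝ)
    (hf_cont : ContinuousOn f (Ici 1))
    (hf_mono : MonotoneOn f (Ici 1))
    (hf_range : ∀ t ∈ Ici (1 : ℝ), 1 ≤ f t)
    (hf_dec : AntitoneOn (fun t => f t / Real.sqrt t) (Ici 1))
    (t : ℝ) (ht : 1 ≤ t)
    (hint : IntegrableOn (fun a => 1 / (a * f a)) (Ioi t)) :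
    2 / f t ≤ (∫ a in Ioi t, 1 / (a * f a)) ∧
      (∫ a in Ioi t, 1 / (a * f a))⁻¹ ≤ f t / 2 := by
  have ht0 : (0:ℝ) < t := lt_of_lt_of_le one_pos ht
  have hft : 1 ≤ f t := hf_range t ht
  have hft0 : 0 < f t := lt_of_lt_of_le one_pos hft
  have hst : 0 < Real.sqrt t := Real.sqrt_pos.mpr ht0
  have hrpow : IntegrableOn (fun a : ℝ => a ^ (-3/2 : ℝ)) (Ioi t) :=
    integrableOn_Ioi_rpow_of_lt (by norm_num) ht0
  have hInt2 : IntegrableOn (fun a : ℝ => Real.sqrt t / f t * a ^ (-3/2 : ℝ)) (Ioi t) :=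
    hrpow.const_mul _
  have key : ∀ a ∈ Ioi t, Real.sqrt t / f t * a ^ (-3/2 : ℝ) ≤ 1 / (a * f a) := by
    intro a ha
    have hta : t ≤ a := le_of_lt ha
    have ha1 : (1:ℝ) ≤ a := le_trans ht hta
    have ha0 : 0 < a := lt_of_lt_of_le one_pos ha1
    have hfa : 1 ≤ f a := hf_range a ha1
    have hfa0 : 0 < f a := lt_of_lt_of_le one_pos hfa
    have hsa : 0 < Real.sqrt a := Real.sqrt_pos.mpr ha0
    have hd : f a / Real.sqrt a ≤ f t / Real.sqrt t := hf_dec ht ha1 hta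
    have h1 : f a * Real.sqrt t ≤ f t * Real.sqrt a := (div_le_div_iff₀ hsa hst).mp hd
    have hrw : a ^ (-3/2 : ℝ) = (a * Real.sqrt a)⁻¹ := by
      rw [show (-3/2 : ℝ) = -(1 + 1/2) by norm_num, Real.rpow_neg ha0.le,
        Real.rpow_add ha0, Real.rpow_one, ← Real.sqrt_eq_rpow]
    rw [hrw, show Real.sqrt t / f t * (a * Real.sqrt a)⁻¹
        = Real.sqrt t / (f t * (a * Real.sqrt a)) by ring,
      div_le_div_iff₀ (by positivity) (by positivity)]
    nlinarith [mul_le_mul_of_nonneg_left h1 ha0.le]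
  have hcomp : (∫ a in Ioi t, Real.sqrt t / f t * a ^ (-3/2 : ℝ))
      ≤ ∫ a in Ioi t, 1 / (a * f a) :=
    setIntegral_mono_on hInt2 hint measurableSet_Ioi key
  have hval : (∫ a in Ioi t, Real.sqrt t / f t * a ^ (-3/2 : ℝ)) = 2 / f t := by
    rw [integral_const_mul, integral_Ioi_rpow_of_lt (by norm_num) ht0]
    rw [show (-3/2 : ℝ) + 1 = -(1/2) by norm_num, Real.rpow_neg ht0.le,
      ← Real.sqrt_eq_rpow]
    field_simp
  have hmain : 2 / f t ≤ ∫ a in Ioi t, 1 / (a * f a) := by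
    rw [← hval]; exact hcomp
  refine ⟨hmain, ?_⟩
  have hI0 : 0 < ∫ a in Ioi t, 1 / (a * f a) :=
    lt_of_lt_of_le (by positivity) hmain
  have := inv_anti₀ (by positivity : (0:ℝ) < 2 / f t) hmain
  rwa [inv_div] at this
end

section
/- Let f : [1,∞) → [1,∞) be continuous and increasing such that t ↦ f(t)/√t is decreasing on [1,∞), and assume that a ↦ 1/(a f(a)) is integrable on (t₀,∞) for some t₀ ≥ 1. Then the function t ↦ g(t)/t, where g(t) := (∫_t^∞ da/(a f(a)))^{−1}, is decreasing (antitone) on [t₀,∞). -/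
/-!
With `h a = 1 / (a f a)`, the substitution `a = t u` gives
`t ∫_t^∞ h = ∫_1^∞ (t u)² h (t u) / u² du`. Since `a² h a = √a / (f a / √a)` is increasing, the
integrand increases with `t`, hence so does `t ∫_t^∞ h = t / g t`.
-/

open Set MeasureTheory

theorem setIntegral_pos_of_forall_pos {X : Type*} [MeasurableSpace X] {μ : Measure X}
    {s : Set X} {h : X → ℝ} (hs : MeasurableSet s) (hμs : μ s ≠ 0) (hint : IntegrableOn h s μ)
    (hpos : ∀ x ∈ s, 0 < h x) : 0 < ∫ x in s, h x ∂μ := by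
  rw [setIntegral_pos_iff_support_of_nonneg_ae
    (ae_restrict_of_forall_mem hs fun x hx => (hpos x hx).le) hint,
    inter_eq_self_of_subset_right (show s ⊆ Function.support h from fun x hx => (hpos x hx).ne')]
  exact pos_iff_ne_zero.2 hμs

theorem smul_setIntegral_Ioi_eq {E : Type*} [NormedAddCommGroup E] [NormedSpace ℝ E]
    (h : ℝ → E) {t : ℝ} (ht : 0 < t) :
    t • ∫ a in Ioi t, h a = ∫ u in Ioi 1, t ^ 2 • h (t * u) := by
  rw [integral_smul, sq, mul_smul, integral_comp_mul_left_Ioi' h 1 ht, mul_one]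

theorem monotoneOn_mul_setIntegral_Ioi {h : ℝ → ℝ} {t₀ : ℝ} (ht₀ : 0 < t₀)
    (hint : IntegrableOn h (Ioi t₀)) (hmono : MonotoneOn (fun a => a ^ 2 * h a) (Ioi t₀)) :
    MonotoneOn (fun t => t * ∫ a in Ioi t, h a) (Ici t₀) := by
  intro s (hs : t₀ ≤ s) t (ht : t₀ ≤ t) hst
  have hscaled : ∀ r, t₀ ≤ r → IntegrableOn (fun u => r ^ 2 • h (r * u)) (Ioi 1) := fun r hr =>
    ((integrableOn_Ioi_comp_mul_left_iff h 1 (ht₀.trans_le hr)).2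
      (hint.mono_set (Ioi_subset_Ioi (by simpa using hr)))).smul (r ^ 2)
  simp only [← smul_eq_mul (a := s), ← smul_eq_mul (a := t),
    smul_setIntegral_Ioi_eq h (ht₀.trans_le hs), smul_setIntegral_Ioi_eq h (ht₀.trans_le ht)]
  refine setIntegral_mono_on (hscaled s hs) (hscaled t ht) measurableSet_Ioi
    fun u (hu : 1 < u) => ?_
  have hsu : t₀ < s * u := by nlinarith
  have hsut : s * u ≤ t * u := mul_le_mul_of_nonneg_right hst (by linarith)
  have key : (s * u) ^ 2 * h (s * u) ≤ (t * u) ^ 2 * h (t * u) :=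
    hmono hsu (hsu.trans_le hsut) hsut
  rw [mul_pow, mul_pow, mul_right_comm, mul_right_comm (t ^ 2)] at key
  exact le_of_mul_le_mul_right key (by positivity)

theorem monotoneOn_div_of_antitoneOn_div_sqrt {f : ℝ → ℝ} {S : Set ℝ} (hS : S ⊆ Ioi 0)
    (hf_pos : ∀ t ∈ S, 0 < f t) (hf_dec : AntitoneOn (fun t => f t / Real.sqrt t) S) :
    MonotoneOn (fun t => t / f t) S := by
  intro a ha b hb hab
  have ha0 : 0 < a := hS ha
  have hb0 : 0 < b := hS hb
  have hsqrt : Real.sqrt a ≤ Real.sqrt b := Real.sqrt_le_sqrt hab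
  have hcross : f b * Real.sqrt a ≤ f a * Real.sqrt b :=
    (div_le_div_iff₀ (Real.sqrt_pos.2 hb0) (Real.sqrt_pos.2 ha0)).1 (hf_dec ha hb hab)
  rw [div_le_div_iff₀ (hf_pos a ha) (hf_pos b hb)]
  calc a * f b = Real.sqrt a * (f b * Real.sqrt a) := by
        linear_combination -f b * Real.mul_self_sqrt ha0.le
    _ ≤ Real.sqrt a * (f a * Real.sqrt b) := by gcongr
    _ ≤ Real.sqrt b * (f a * Real.sqrt b) := by
        gcongr; exact mul_nonneg (hf_pos a ha).le (Real.sqrt_nonneg b)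
    _ = b * f a := by linear_combination f a * Real.mul_self_sqrt hb0.le

theorem g_div_t_antitoneOn_general
    (f : ℝ → ℝ)
    (hf_range : ∀ t ∈ Ici (1 : ℝ), 1 ≤ f t)
    (hf_dec : AntitoneOn (fun t => f t / Real.sqrt t) (Ici 1))
    (t₀ : ℝ) (ht₀ : 1 ≤ t₀)
    (hint : IntegrableOn (fun a => 1 / (a * f a)) (Ioi t₀)) :
    AntitoneOn (fun t => (∫ a in Ioi t, 1 / (a * f a))⁻¹ / t) (Ici t₀) := by
  have hf_pos : ∀ t ∈ Ici (1 : ℝ), 0 < f t := fun t ht => one_pos.trans_le (hf_range t ht)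
  have hIoi : Ioi t₀ ⊆ Ici 1 := fun a (ha : t₀ < a) => (ht₀.trans ha.le : 1 ≤ a)
  have hweight : MonotoneOn (fun a => a ^ 2 * (1 / (a * f a))) (Ioi t₀) :=
    ((monotoneOn_div_of_antitoneOn_div_sqrt (fun a (ha : 1 ≤ a) => one_pos.trans_le ha)
      hf_pos hf_dec).mono hIoi).congr fun a ha => by
        have ha0 : a ≠ 0 := (zero_lt_one.trans_le (hIoi ha)).ne'
        field_simp [(hf_pos a (hIoi ha)).ne']
  intro s (hs : t₀ ≤ s) t ht hst
  have hpos : 0 < s * ∫ a in Ioi s, 1 / (a * f a) := by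
    exact mul_pos (by linarith) (setIntegral_pos_of_forall_pos measurableSet_Ioi (by simp)
      (hint.mono_set (Ioi_subset_Ioi hs)) fun a (ha : s < a) =>
        one_div_pos.2 (mul_pos (by linarith) (hf_pos a (by linarith : (1 : ℝ) ≤ a))))
  simp only [inv_div_left]
  exact inv_anti₀ hpos (monotoneOn_mul_setIntegral_Ioi (by linarith) hint hweight hs ht hst)

/-- If `f : [1,∞) → [1,∞)` is continuous and increasing with `f(t)/√t` decreasing,
and `a ↦ 1/(a f(a))` is integrable on `(t₀,∞)` for some `t₀ ≥ 1`, then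
`t ↦ g(t)/t`, where `g(t) := (∫_t^∞ da/(a f(a)))⁻¹`, is decreasing on `[t₀,∞)`. -/
theorem g_div_t_antitoneOn
    (f : ℝ → ℝ)
    (hf_cont : ContinuousOn f (Ici 1))
    (hf_mono : MonotoneOn f (Ici 1))
    (hf_range : ∀ t ∈ Ici (1 : ℝ), 1 ≤ f t)
    (hf_dec : AntitoneOn (fun t => f t / Real.sqrt t) (Ici 1))
    (t₀ : ℝ) (ht₀ : 1 ≤ t₀)
    (hint : IntegrableOn (fun a => 1 / (a * f a)) (Ioi t₀)) :
    AntitoneOn (fun t => (∫ a in Ioi t, 1 / (a * f a))⁻¹ / t) (Ici t₀) :=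
  g_div_t_antitoneOn_general f hf_range hf_dec t₀ ht₀ hint
end
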